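/- arXiv:2201.09200 — 2 statements merged into one kernel-verified Lean document; each statement's English description precedes it below -/
import Mathlib

section
/- Fix distributions P_N ≠ P_A on the finite alphabet X with common support and fix integers t ≥ 1 and l ≥ 1. Viewing M as a real variable with M > t + l, define f(M) = l·D(P_A ‖ P_mix^{t,l}(M)) + (M − t − l)·D(P_N ‖ P_mix^{t,l}(M)) where P_mix^{t,l}(M) = (l·P_A + (M − t − l)·P_N)/(M − t). Then f is differentiable in M with derivative f'(M) = D(P_N ‖ P_mix^{t,l}(M)); in particular f is strictly increasing in M whenever D(P_N ‖ P_mix^{t,l}(M)) > 0. -/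
open Finset MeasureTheory Filter

noncomputable section

/-- A probability mass function on a finite alphabet `X`. -/
def IsProbDist {X : Type*} [Fintype X] (P : X → ℝ) : Prop :=
  (∀ x, 0 ≤ P x) ∧ ∑ x, P x = 1

/-- Kullback–Leibler divergence between two mass functions on a finite alphabet. -/
def KL {X : Type*} [Fintype X] (P Q : X → ℝ) : ℝ :=
  ∑ x, P x * Real.log (P x / Q x)

/-- The collection `S` of candidate outlier index sets:
nonempty subsets of `[M]` of cardinality at most `T`. -/
def SS (M T : ℕ) : Finset (Finset (Fin M)) :=
  Finset.univ.filter fun B => B.Nonempty ∧ B.card ≤ T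

/-- `jmap B i = j` when `i` is the `j`-th smallest element of `B` (1-based). -/
def jmap {M : ℕ} (B : Finset (Fin M)) (i : Fin M) : ℕ :=
  (B.filter fun i' => i' ≤ i).card

/-- The statistic `G_B(Q)`: sum over `t ∉ B` of the KL divergence of `Q t` from the
average of the `Q l`, `l ∉ B`. -/
def Gfun {X : Type*} [Fintype X] {M : ℕ} (B : Finset (Fin M)) (Q : Fin M → X → ℝ) : ℝ :=
  ∑ t ∈ Bᶜ, KL (Q t) fun x => (∑ l ∈ Bᶜ, Q l x) / ((M : ℝ) - B.card)

/-- Empirical distribution of a length-`n` sequence. -/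
def emp {X : Type*} [Fintype X] [DecidableEq X] {n : ℕ} (x : Fin n → X) (a : X) : ℝ :=
  ((Finset.univ.filter fun k => x k = a).card : ℝ) / n

/-- Scoring function `S_C(x^n) = G_C` of the empirical distributions. -/
def score {X : Type*} [Fintype X] [DecidableEq X] {M n : ℕ} (C : Finset (Fin M))
    (xs : Fin M → Fin n → X) : ℝ :=
  Gfun C fun i => emp (xs i)

/-- Minimum of the scores over `S \ {B}`. -/
def minScore {X : Type*} [Fintype X] [DecidableEq X] {M n : ℕ} (T : ℕ) (B : Finset (Fin M))
    (xs : Fin M → Fin n → X) : ℝ :=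
  sInf ((fun C => score C xs) '' {C | C ∈ SS M T ∧ C ≠ B})

open Classical in
/-- The threshold-based test `Ψ_n`: output `some B` (hypothesis `H_B`) if
`S_B < min_{C ∈ S\{B}} S_C` and this minimum exceeds `λ`; otherwise output `none` (`H_r`). -/
def Psi {X : Type*} [Fintype X] [DecidableEq X] {M n : ℕ} (T : ℕ) (lam : ℝ)
    (xs : Fin M → Fin n → X) : Option (Finset (Fin M)) :=
  if h : ∃ B ∈ SS M T, score B xs < minScore T B xs ∧ lam < minScore T B xs
  then some h.choose else none

/-- Generating distribution of the `i`-th sequence under hypothesis `H_B`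
(with `B = ∅` giving the null hypothesis `H_r`). -/
def pdist {X : Type*} [Fintype X] {M : ℕ} (B : Finset (Fin M)) (PN : X → ℝ)
    (PA : ℕ → X → ℝ) (i : Fin M) : X → ℝ :=
  if i ∈ B then PA (jmap B i) else PN

open Classical in
/-- Probability of the event `A` on `M` length-`n` sequences, where the `i`-th sequence is
i.i.d. from `P_{A,ȷ_B(i)}` if `i ∈ B` and from `P_N` otherwise, independently across sequences. -/
def probB {X : Type*} [Fintype X] {M : ℕ} (n : ℕ) (B : Finset (Fin M)) (PN : X → ℝ)
    (PA : ℕ → X → ℝ) (A : (Fin M → Fin n → X) → Prop) : ℝ :=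
  ∑ xs : Fin M → Fin n → X, if A xs then ∏ i, ∏ k, pdist B PN PA i (xs i k) else 0

/-- Misclassification error probability `β_B(φ_n)` of a test `φ`. -/
def betaT {X : Type*} [Fintype X] {M n : ℕ} (φ : (Fin M → Fin n → X) → Option (Finset (Fin M)))
    (B : Finset (Fin M)) (PN : X → ℝ) (PA : ℕ → X → ℝ) : ℝ :=
  probB n B PN PA fun xs => φ xs ≠ some B ∧ φ xs ≠ none

/-- False reject probability `ζ_B(φ_n)` of a test `φ`. -/
def zetaT {X : Type*} [Fintype X] {M n : ℕ} (φ : (Fin M → Fin n → X) → Option (Finset (Fin M)))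
    (B : Finset (Fin M)) (PN : X → ℝ) (PA : ℕ → X → ℝ) : ℝ :=
  probB n B PN PA fun xs => φ xs = none

/-- False alarm probability `P_fa(φ_n)` of a test `φ` (all sequences i.i.d. from `P_N`). -/
def PfaT {X : Type*} [Fintype X] {M n : ℕ} (φ : (Fin M → Fin n → X) → Option (Finset (Fin M)))
    (PN : X → ℝ) (PA : ℕ → X → ℝ) : ℝ :=
  probB n (∅ : Finset (Fin M)) PN PA fun xs => φ xs ≠ none

/-- A valid tuple of nominal and anomalous distributions: all are probability distributions
with common support, and each anomalous distribution differs from the nominal one. -/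
def ValidTuple {X : Type*} [Fintype X] (T : ℕ) (PN : X → ℝ) (PA : ℕ → X → ℝ) : Prop :=
  IsProbDist PN ∧ (∀ j ∈ Finset.Icc 1 T, IsProbDist (PA j)) ∧
    (∀ j ∈ Finset.Icc 1 T, ∀ x, PA j x = 0 ↔ PN x = 0) ∧
    ∀ j ∈ Finset.Icc 1 T, PA j ≠ PN

/-- The mixture distribution `P_mix^{(B,C)}`. -/
def Pmix {X : Type*} [Fintype X] {M : ℕ} (B C : Finset (Fin M)) (PN : X → ℝ)
    (PA : ℕ → X → ℝ) (x : X) : ℝ :=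
  ((∑ i ∈ B \ C, PA (jmap B i) x) + ∑ _i ∈ Bᶜ \ C, PN x) / ((M : ℝ) - C.card)

/-- `GD(B, C, P_N, P_B)`. -/
def GD {X : Type*} [Fintype X] {M : ℕ} (B C : Finset (Fin M)) (PN : X → ℝ)
    (PA : ℕ → X → ℝ) : ℝ :=
  (∑ i ∈ B \ C, KL (PA (jmap B i)) (Pmix B C PN PA)) +
    ∑ _i ∈ Bᶜ \ C, KL PN (Pmix B C PN PA)

/-- `GD(B, P_N, P_B) = min_{C ∈ S \ {B}} GD(B, C, P_N, P_B)`. -/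
def GDmin {X : Type*} [Fintype X] {M : ℕ} (T : ℕ) (B : Finset (Fin M)) (PN : X → ℝ)
    (PA : ℕ → X → ℝ) : ℝ :=
  sInf {r | ∃ C, (C ∈ SS M T ∧ C ≠ B) ∧ r = GD B C PN PA}

/-- Expectation of `f` under the mass function `P`. -/
def expect {X : Type*} [Fintype X] (P : X → ℝ) (f : X → ℝ) : ℝ := ∑ x, P x * f x

/-- Variance of `f` under the mass function `P`. -/
def varD {X : Type*} [Fintype X] (P : X → ℝ) (f : X → ℝ) : ℝ :=
  expect P fun x => (f x - expect P f) ^ 2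

/-- The sum `ı_{B,C}` of information densities. -/
def iota {X : Type*} [Fintype X] {M : ℕ} (B C : Finset (Fin M)) (PN : X → ℝ)
    (PA : ℕ → X → ℝ) (xs : Fin M → X) : ℝ :=
  (∑ j ∈ B \ C, Real.log (PA (jmap B j) (xs j) / Pmix B C PN PA (xs j))) +
    ∑ j ∈ Bᶜ \ C, Real.log (PN (xs j) / Pmix B C PN PA (xs j))

/-- Diagonal entries `V(B, C)` of the covariance matrix: linear combination of variances
of the information densities. -/
def Vdiag {X : Type*} [Fintype X] {M : ℕ} (B C : Finset (Fin M)) (PN : X → ℝ)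
    (PA : ℕ → X → ℝ) : ℝ :=
  (∑ j ∈ B \ C, varD (PA (jmap B j)) fun x => Real.log (PA (jmap B j) x / Pmix B C PN PA x)) +
    ∑ _j ∈ Bᶜ \ C, varD PN fun x => Real.log (PN x / Pmix B C PN PA x)

/-- Off-diagonal entries `Cov(C_i, C_k) = E[ı_{B,C_i} ı_{B,C_k}]` with independent
`X_j ~ P_{A,ȷ_B(j)}` for `j ∈ B` and `X_j ~ P_N` otherwise. -/
def covD {X : Type*} [Fintype X] {M : ℕ} (B Ci Ck : Finset (Fin M)) (PN : X → ℝ)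
    (PA : ℕ → X → ℝ) : ℝ :=
  ∑ xs : Fin M → X, (∏ j, pdist B PN PA j (xs j)) * (iota B Ci PN PA xs * iota B Ck PN PA xs)

/-- The covariance matrix `V(B, P_N, P_B)` with respect to an enumeration `enum` of `S \ {B}`. -/
def Vmat {X : Type*} [Fintype X] {M k : ℕ} (B : Finset (Fin M)) (enum : Fin k → Finset (Fin M))
    (PN : X → ℝ) (PA : ℕ → X → ℝ) : Matrix (Fin k) (Fin k) ℝ :=
  Matrix.of fun i j => if i = j then Vdiag B (enum i) PN PA else covD B (enum i) (enum j) PN PA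

/-- Density of a multivariate Gaussian with mean `μ` and covariance matrix `V`. -/
def gaussDensity {ι : Type*} [Fintype ι] [DecidableEq ι] (μ : ι → ℝ) (V : Matrix ι ι ℝ)
    (x : ι → ℝ) : ℝ :=
  Real.exp (-(1 / 2) * dotProduct (x - μ) (V⁻¹.mulVec (x - μ))) /
    Real.sqrt ((2 * Real.pi) ^ Fintype.card ι * V.det)

/-- The multivariate complementary Gaussian CDF
`Q_k(a; μ; V) = ∫_{a_1}^∞ ⋯ ∫_{a_k}^∞ N(x; μ, V) dx`. -/
def Qcdf {ι : Type*} [Fintype ι] [DecidableEq ι] (a μ : ι → ℝ) (V : Matrix ι ι ℝ) : ℝ :=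
  ∫ x in {x : ι → ℝ | ∀ i, a i ≤ x i}, gaussDensity μ V x

/-- The false reject exponent function `LD_B(λ, P_N, P_B)`. -/
def LD {X : Type*} [Fintype X] {M : ℕ} (T : ℕ) (B : Finset (Fin M)) (lam : ℝ) (PN : X → ℝ)
    (PA : ℕ → X → ℝ) : ℝ :=
  sInf {r | ∃ C ∈ SS M T, ∃ D ∈ SS M T, C ≠ D ∧ ∃ Q : Fin M → X → ℝ,
    (∀ i, IsProbDist (Q i)) ∧ Gfun C Q ≤ lam ∧ Gfun D Q ≤ lam ∧
    r = (∑ i ∈ B, KL (Q i) (PA (jmap B i))) + ∑ i ∈ Bᶜ, KL (Q i) PN}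

open Classical in
/-- `L*(ε)`: the largest `L` such that the `d(B)`-variate complementary Gaussian CDF,
restricted to the indices minimizing `GD(B, C_i, P_N, P_B)`, evaluated at `L·1` is `≥ 1 − ε`. -/
def Lstar {X : Type*} [Fintype X] {M k : ℕ} (T : ℕ) (eps : ℝ) (B : Finset (Fin M))
    (enum : Fin k → Finset (Fin M)) (PN : X → ℝ) (PA : ℕ → X → ℝ) : ℝ :=
  sSup {L : ℝ |
    1 - eps ≤ Qcdf (fun _ : {i : Fin k // GD B (enum i) PN PA = GDmin T B PN PA} => L)
      (fun _ => 0) ((Vmat B enum PN PA).submatrix Subtype.val Subtype.val)}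

/-- The mixture `P_mix^{t,l}(M) = (l·P_A + (M − t − l)·P_N)/(M − t)` (real parameters). -/
def pmixR {X : Type*} (PN PA0 : X → ℝ) (t l M : ℝ) (x : X) : ℝ :=
  (l * PA0 x + (M - t - l) * PN x) / (M - t)

/-- `f(M) = l·D(P_A ‖ P_mix^{t,l}(M)) + (M − t − l)·D(P_N ‖ P_mix^{t,l}(M))`. -/
def fGD {X : Type*} [Fintype X] (PN PA0 : X → ℝ) (t l M : ℝ) : ℝ :=
  l * KL PA0 (pmixR PN PA0 t l M) + (M - t - l) * KL PN (pmixR PN PA0 t l M)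

/-- `GD(B, P_N, P_B)` in the common-anomalous-distribution case, via the formula
`min_{t ∈ [T]} min_{l ∈ [|B|]} ( l·D(P_A‖P_mix^{t,l}) + (M−t−l)·D(P_N‖P_mix^{t,l}) )`,
as a function of the number of sequences `M` (with `T = ⌈M/2 − 1⌉` and `b = |B|`). -/
def gGD {X : Type*} [Fintype X] (b M : ℕ) (PN PA0 : X → ℝ) : ℝ :=
  sInf {r | ∃ t ∈ Finset.Icc 1 ((M - 1) / 2), ∃ l ∈ Finset.Icc 1 b,
    r = (l : ℝ) * KL PA0 (pmixR PN PA0 t l M) + ((M : ℝ) - t - l) * KL PN (pmixR PN PA0 t l M)}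

end

/-! Write `q = P_mix^{t,l}(M)`. Apart from the explicit factor `M − t − l`, `f` depends on `M`
only through `q`, and `l·P_A + (M − t − l)·P_N = (M − t)·q`. Differentiating `a·log (a/q)` in `q`
gives `−a·q'/q`, so all these terms together contribute `−(M − t)·q' = q − P_N`, whose total mass
vanishes. What is left is `D(P_N ‖ q)`, and strict monotonicity is the mean value theorem. -/

open Real Topology

lemma mul_log_div_of_ne_zero (a : ℝ) {q : ℝ} (hq : q ≠ 0) :
    a * log (a / q) = a * log a - a * log q := by
  rcases eq_or_ne a 0 with rfl | ha
  · simp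
  · rw [log_div ha hq, mul_sub]

lemma hasDerivAt_weighted_mul_log_div {q : ℝ → ℝ} {q' a p t l M : ℝ} (hq : HasDerivAt q q' M)
    (hq₀ : q M ≠ 0) :
    HasDerivAt (fun M => l * (a * log (a / q M)) + (M - t - l) * (p * log (p / q M)))
      (p * log (p / q M) - (l * a + (M - t - l) * p) * q' / q M) M := by
  have hlog : HasDerivAt (fun M => log (q M)) (q' / q M) M := hq.log hq₀
  have hsplit : (fun M => l * (a * log (a / q M)) + (M - t - l) * (p * log (p / q M))) =ᶠ[𝓝 M]
      fun M => l * (a * log a - a * log (q M)) + (M - t - l) * (p * log p - p * log (q M)) := by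
    filter_upwards [hq.continuousAt.eventually_ne hq₀] with M hM
    rw [mul_log_div_of_ne_zero a hM, mul_log_div_of_ne_zero p hM]
  have hlin : HasDerivAt (fun M : ℝ => M - t - l) 1 M := ((hasDerivAt_id M).sub_const t).sub_const l
  refine HasDerivAt.congr_of_eventuallyEq ?_ hsplit
  convert (((hasDerivAt_const M (a * log a)).fun_sub (hlog.const_mul a)).const_mul l).fun_add
    (hlin.fun_mul ((hasDerivAt_const M (p * log p)).fun_sub (hlog.const_mul p))) using 1
  rw [mul_log_div_of_ne_zero p hq₀]
  ring

lemma hasDerivAt_pmixR {X : Type*} (PN PA0 : X → ℝ) (t l : ℝ) {M : ℝ} (hM : M ≠ t) (x : X) :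
    HasDerivAt (fun M => pmixR PN PA0 t l M x) ((PN x - pmixR PN PA0 t l M x) / (M - t)) M := by
  have hs : M - t ≠ 0 := sub_ne_zero.mpr hM
  have hlin : HasDerivAt (fun M : ℝ => M - t - l) 1 M := ((hasDerivAt_id M).sub_const t).sub_const l
  have h : HasDerivAt (fun M => pmixR PN PA0 t l M x)
      ((1 * PN x * (M - t) - (l * PA0 x + (M - t - l) * PN x) * 1) / (M - t) ^ 2) M :=
    ((hlin.mul_const (PN x)).const_add (l * PA0 x)).fun_div ((hasDerivAt_id' M).sub_const t) hs
  refine h.congr_deriv ?_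
  simp only [pmixR]
  field_simp

lemma sum_pmixR {X : Type*} [Fintype X] {PN PA0 : X → ℝ} (hPN : ∑ x, PN x = 1)
    (hPA : ∑ x, PA0 x = 1) (t l : ℝ) {M : ℝ} (hM : M ≠ t) : ∑ x, pmixR PN PA0 t l M x = 1 := by
  have hs : M - t ≠ 0 := sub_ne_zero.mpr hM
  unfold pmixR
  rw [← Finset.sum_div, Finset.sum_add_distrib, ← Finset.mul_sum, ← Finset.mul_sum, hPN, hPA]
  field_simp
  ring

lemma hasDerivAt_fGD_summand {X : Type*} {PN PA0 : X → ℝ} {t l M : ℝ} (x : X) (hPN : 0 ≤ PN x)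
    (hPA : 0 ≤ PA0 x) (hl : 0 ≤ l) (hM : t + l < M) :
    HasDerivAt (fun M => l * (PA0 x * log (PA0 x / pmixR PN PA0 t l M x)) +
        (M - t - l) * (PN x * log (PN x / pmixR PN PA0 t l M x)))
      (PN x * log (PN x / pmixR PN PA0 t l M x) + (pmixR PN PA0 t l M x - PN x)) M := by
  have hs : 0 < M - t := by linarith
  have hnum : l * PA0 x + (M - t - l) * PN x = (M - t) * pmixR PN PA0 t l M x := by
    rw [pmixR]
    field_simp
  by_cases hq : pmixR PN PA0 t l M x = 0
  · have hPN0 : PN x = 0 := by nlinarith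
    have hlPA : l * PA0 x = 0 := by nlinarith
    simp only [hq, hPN0, ← mul_assoc, hlPA, zero_mul, mul_zero, add_zero, sub_zero]
    exact hasDerivAt_const M 0
  · have hq' := hasDerivAt_pmixR PN PA0 t l (sub_pos.mp hs).ne' x
    refine (hasDerivAt_weighted_mul_log_div hq' hq).congr_deriv ?_
    rw [hnum]
    field_simp
    ring

lemma hasDerivAt_fGD {X : Type*} [Fintype X] {PN PA0 : X → ℝ} (hPN : IsProbDist PN)
    (hPA : IsProbDist PA0) {t l M : ℝ} (hl : 0 ≤ l) (hM : t + l < M) :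
    HasDerivAt (fGD PN PA0 t l) (KL PN (pmixR PN PA0 t l M)) M := by
  have hsum := HasDerivAt.fun_sum (u := Finset.univ) fun x _ =>
    hasDerivAt_fGD_summand x (hPN.1 x) (hPA.1 x) hl hM
  have hf : fGD PN PA0 t l = fun M => ∑ x, (l * (PA0 x * log (PA0 x / pmixR PN PA0 t l M x)) +
      (M - t - l) * (PN x * log (PN x / pmixR PN PA0 t l M x))) := by
    funext M
    simp only [fGD, KL, Finset.mul_sum, ← Finset.sum_add_distrib]
  rw [hf]
  refine hsum.congr_deriv ?_
  have hmass : ∑ x, (pmixR PN PA0 t l M x - PN x) = 0 := by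
    rw [Finset.sum_sub_distrib, sum_pmixR hPN.2 hPA.2 t l (by linarith), hPN.2, sub_self]
  rw [Finset.sum_add_distrib, hmass, add_zero, KL]

theorem fGD_hasDerivAt_and_strictMono_general
    {X : Type*} [Fintype X] (PN PA0 : X → ℝ) (hPN : IsProbDist PN) (hPA : IsProbDist PA0)
    (t l : ℕ) :
    (∀ M : ℝ, ((t : ℝ) + l) < M →
      HasDerivAt (fun M' => fGD PN PA0 t l M') (KL PN (pmixR PN PA0 t l M)) M) ∧
    ((∀ M ∈ Set.Ioi ((t : ℝ) + l), 0 < KL PN (pmixR PN PA0 t l M)) →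
      StrictMonoOn (fun M' => fGD PN PA0 t l M') (Set.Ioi ((t : ℝ) + l))) := by
  have hderiv : ∀ M : ℝ, ((t : ℝ) + l) < M →
      HasDerivAt (fun M' => fGD PN PA0 t l M') (KL PN (pmixR PN PA0 t l M)) M :=
    fun M hM => hasDerivAt_fGD hPN hPA l.cast_nonneg hM
  refine ⟨hderiv, fun hpos => strictMonoOn_of_hasDerivWithinAt_pos (convex_Ioi _)
    (f' := fun M => KL PN (pmixR PN PA0 t l M))
    (fun M hM => (hderiv M hM).continuousAt.continuousWithinAt) ?_ ?_⟩ <;> rw [interior_Ioi]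
  · exact fun M hM => (hderiv M hM).hasDerivWithinAt
  · exact hpos

/-- Fix `P_N ≠ P_A` with common support and integers `t, l ≥ 1`. Viewing `M`
as a real variable with `M > t + l`, the function
`f(M) = l·D(P_A‖P_mix^{t,l}(M)) + (M−t−l)·D(P_N‖P_mix^{t,l}(M))` is differentiable with
derivative `f'(M) = D(P_N‖P_mix^{t,l}(M))`; in particular `f` is strictly increasing whenever
`D(P_N‖P_mix^{t,l}(M)) > 0`. -/
theorem fGD_hasDerivAt_and_strictMono
    {X : Type*} [Fintype X] (PN PA0 : X → ℝ) (hPN : IsProbDist PN) (hPA : IsProbDist PA0)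
    (hsupp : ∀ x, PA0 x = 0 ↔ PN x = 0) (hne : PA0 ≠ PN)
    (t l : ℕ) (ht : 1 ≤ t) (hl : 1 ≤ l) :
    (∀ M : ℝ, ((t : ℝ) + l) < M →
      HasDerivAt (fun M' => fGD PN PA0 t l M') (KL PN (pmixR PN PA0 t l M)) M) ∧
    ((∀ M ∈ Set.Ioi ((t : ℝ) + l), 0 < KL PN (pmixR PN PA0 t l M)) →
      StrictMonoOn (fun M' => fGD PN PA0 t l M') (Set.Ioi ((t : ℝ) + l))) :=
  fGD_hasDerivAt_and_strictMono_general PN PA0 hPN hPA t l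
end

section
/- Fix B ∈ S and distributions (P_N, P_B) on the finite alphabet X with common support and P_{A,j} ≠ P_N for all j ∈ [|B|]. If the threshold λ of the test Ψ_n satisfies 0 < λ < GD(B, P_N, P_B), then the false reject probability vanishes: lim_{n→∞} ζ_B(Ψ_n | P_N, P_T) = 0. Conversely, if λ > GD(B, P_N, P_B), then lim_{n→∞} ζ_B(Ψ_n | P_N, P_T) = 1. -/
open Finset MeasureTheory Filter

/-
Under `H_B` the empirical distribution of every sequence concentrates at its generating law:
by Chebyshev each empirical frequency is `δ`-close to the true one except with probability at
most `1/(n δ²)`, and a union bound over sequences and letters keeps the total `O(1/n)`.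
The score `S_C` is `G_C` applied to the empirical distributions, and `G_C` is continuous at the
true tuple within the tuples supported inside its support; there its value is
`GD(B, C, P_N, P_B)`, and `0` for `C = B`. So with probability tending to one every score is
`ε`-close to its limit: `S_B ≈ 0` and `min_{C ≠ B} S_C ≈ GD(B, P_N, P_B)`. For `λ` below that
minimum the test then accepts `H_B`; for `λ` above it the test rejects every hypothesis.
-/

section ProductSums

variable {ι α : Type*} [Fintype ι] [DecidableEq ι] [Fintype α] {p : ι → α → ℝ}

theorem sum_pi_prod_eq_one (hp : ∀ i, ∑ x, p i x = 1) : ∑ y : ι → α, ∏ i, p i (y i) = 1 := by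
  simp [← Fintype.prod_sum, hp]

theorem sum_pi_prod_mul_apply (hp : ∀ i, ∑ x, p i x = 1) (i₀ : ι) (f : α → ℝ) :
    ∑ y : ι → α, (∏ i, p i (y i)) * f (y i₀) = ∑ x, p i₀ x * f x := by
  have hsplit : ∀ y : ι → α, (∏ i, p i (y i)) * f (y i₀)
      = ∏ i, p i (y i) * (if i = i₀ then f (y i) else 1) := fun y => by
    rw [Finset.prod_mul_distrib, Finset.prod_ite_eq', if_pos (Finset.mem_univ _)]
  rw [Finset.sum_congr rfl fun y _ => hsplit y,
    ← Fintype.prod_sum fun i x => p i x * if i = i₀ then f x else 1,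
    Fintype.prod_eq_single i₀ fun i hi => by simp [hi, hp]]
  simp

theorem sum_pi_prod_mul_apply_mul_apply (hp : ∀ i, ∑ x, p i x = 1) {k l : ι} (hkl : k ≠ l)
    (f g : α → ℝ) :
    ∑ y : ι → α, (∏ i, p i (y i)) * (f (y k) * g (y l))
      = (∑ x, p k x * f x) * ∑ x, p l x * g x := by
  have hsplit : ∀ y : ι → α, (∏ i, p i (y i)) * (f (y k) * g (y l))
      = ∏ i, p i (y i) * (if i = k then f (y i) else if i = l then g (y i) else 1) := fun y => by
    rw [Finset.prod_mul_distrib,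
      Finset.prod_eq_mul (f := fun i => if i = k then f (y i) else if i = l then g (y i) else 1)
        k l hkl (fun c _ hc => by simp [hc.1, hc.2]) (by simp) (by simp)]
    simp [hkl.symm]
  rw [Finset.sum_congr rfl fun y _ => hsplit y,
    ← Fintype.prod_sum fun i x => p i x * if i = k then f x else if i = l then g x else 1,
    Fintype.prod_eq_mul k l hkl fun i hi => by simp [hi.1, hi.2, hp]]
  simp [hkl.symm]

end ProductSums

section Empirical

variable {X : Type*} [Fintype X] [DecidableEq X] {q : X → ℝ}

theorem emp_apply_eq_sum_div {n : ℕ} (y : Fin n → X) (a : X) :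
    emp y a = (∑ k, if y k = a then (1 : ℝ) else 0) / n := by
  simp [emp, Finset.sum_boole]

theorem sum_pi_prod_mul_emp_sub_sq_le (h0 : ∀ x, 0 ≤ q x) (h1 : ∑ x, q x = 1) {n : ℕ}
    (hn : 0 < n) (a : X) :
    ∑ y : Fin n → X, (∏ k, q (y k)) * (emp y a - q a) ^ 2 ≤ 1 / n := by
  set e : X → ℝ := fun x => (if x = a then 1 else 0) - q a with he
  have hqa : q a ≤ 1 := h1 ▸ Finset.single_le_sum (fun x _ => h0 x) (Finset.mem_univ a)
  have hmean : ∑ x, q x * e x = 0 := by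
    simp [he, mul_sub, Finset.sum_sub_distrib, ← Finset.sum_mul, h1]
  have hvar : ∑ x, q x * e x ^ 2 ≤ 1 := by
    refine h1 ▸ Finset.sum_le_sum fun x _ => mul_le_of_le_one_right (h0 x) ?_
    show ((if x = a then 1 else 0) - q a) ^ 2 ≤ 1
    split_ifs <;> nlinarith [h0 a]
  have hcov : ∀ k l : Fin n, ∑ y : Fin n → X, (∏ i, q (y i)) * (e (y k) * e (y l))
      = if k = l then ∑ x, q x * e x ^ 2 else 0 := by
    intro k l
    split_ifs with hkl
    · subst hkl
      simp only [← sq]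
      exact sum_pi_prod_mul_apply (p := fun _ => q) (fun _ => h1) k (fun x => e x ^ 2)
    · simpa [hmean] using sum_pi_prod_mul_apply_mul_apply (p := fun _ => q) (fun _ => h1) hkl e e
  have hn' : (0 : ℝ) < n := by exact_mod_cast hn
  have hcentred : ∀ y : Fin n → X, emp y a - q a = (∑ k, e (y k)) / n := fun y => by
    rw [emp_apply_eq_sum_div]
    field_simp
    simp [he, Finset.sum_sub_distrib]
  calc ∑ y : Fin n → X, (∏ k, q (y k)) * (emp y a - q a) ^ 2
      = (∑ k, ∑ l, ∑ y : Fin n → X, (∏ i, q (y i)) * (e (y k) * e (y l))) / n ^ 2 := by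
        simp_rw [hcentred, div_pow, mul_div_assoc', ← Finset.sum_div, sq, Finset.sum_mul_sum,
          Finset.mul_sum]
        rw [Finset.sum_comm]
        exact congrArg (· / _) (Finset.sum_congr rfl fun k _ => Finset.sum_comm)
    _ = n * (∑ x, q x * e x ^ 2) / n ^ 2 := by simp [hcov]
    _ ≤ 1 / n := by
        rw [div_le_div_iff₀ (by positivity) hn']
        nlinarith

end Empirical

section Probability

variable {X : Type*} [Fintype X] {M n : ℕ} {B : Finset (Fin M)} {PN : X → ℝ} {PA : ℕ → X → ℝ}

theorem sum_prod_prod_pdist_eq_one (h1 : ∀ i, ∑ x, pdist B PN PA i x = 1) :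
    ∑ xs : Fin M → Fin n → X, ∏ i, ∏ k, pdist B PN PA i (xs i k) = 1 :=
  sum_pi_prod_eq_one fun i => sum_pi_prod_eq_one fun _ => h1 i

theorem prod_prod_pdist_nonneg (h0 : ∀ i x, 0 ≤ pdist B PN PA i x) (xs : Fin M → Fin n → X) :
    0 ≤ ∏ i, ∏ k, pdist B PN PA i (xs i k) :=
  Finset.prod_nonneg fun i _ => Finset.prod_nonneg fun k _ => h0 i (xs i k)

theorem probB_nonneg (h0 : ∀ i x, 0 ≤ pdist B PN PA i x) (A : (Fin M → Fin n → X) → Prop) :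
    0 ≤ probB n B PN PA A :=
  Finset.sum_nonneg fun xs _ => by split_ifs <;> simp [prod_prod_pdist_nonneg h0 xs]

theorem probB_add_probB_not (h1 : ∀ i, ∑ x, pdist B PN PA i x = 1)
    (A : (Fin M → Fin n → X) → Prop) :
    probB n B PN PA A + probB n B PN PA (fun xs => ¬A xs) = 1 := by
  rw [probB, probB, ← Finset.sum_add_distrib, ← sum_prod_prod_pdist_eq_one h1]
  exact Finset.sum_congr rfl fun xs _ => by split_ifs <;> simp_all

theorem probB_le_one (h0 : ∀ i x, 0 ≤ pdist B PN PA i x) (h1 : ∀ i, ∑ x, pdist B PN PA i x = 1)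
    (A : (Fin M → Fin n → X) → Prop) : probB n B PN PA A ≤ 1 := by
  linarith [probB_add_probB_not h1 A, probB_nonneg h0 fun xs => ¬A xs]

theorem probB_mono_of_support (h0 : ∀ i x, 0 ≤ pdist B PN PA i x)
    {A A' : (Fin M → Fin n → X) → Prop}
    (h : ∀ xs, (∏ i, ∏ k, pdist B PN PA i (xs i k)) ≠ 0 → A xs → A' xs) :
    probB n B PN PA A ≤ probB n B PN PA A' := by
  refine Finset.sum_le_sum fun xs _ => ?_
  by_cases hw : (∏ i, ∏ k, pdist B PN PA i (xs i k)) = 0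
  · split_ifs <;> simp [hw]
  · split_ifs <;> simp_all [prod_prod_pdist_nonneg h0 xs]

theorem probB_exists_le {J : Type*} [Fintype J] (h0 : ∀ i x, 0 ≤ pdist B PN PA i x)
    (A : J → (Fin M → Fin n → X) → Prop) :
    probB n B PN PA (fun xs => ∃ j, A j xs) ≤ ∑ j, probB n B PN PA (A j) := by
  classical
  simp only [probB]
  rw [Finset.sum_comm]
  refine Finset.sum_le_sum fun xs _ => ?_
  have hw := prod_prod_pdist_nonneg h0 xs
  split_ifs with hA
  · obtain ⟨j, hj⟩ := hA
    calc ∏ i, ∏ k, pdist B PN PA i (xs i k)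
        = if A j xs then ∏ i, ∏ k, pdist B PN PA i (xs i k) else 0 := by rw [if_pos hj]
      _ ≤ _ := Finset.single_le_sum (f := fun j => if A j xs then _ else 0)
          (fun j _ => by split_ifs <;> simp [hw]) (Finset.mem_univ j)
  · exact Finset.sum_nonneg fun j _ => by split_ifs <;> simp [hw]

theorem probB_le_sum_mul_sq_div (h0 : ∀ i x, 0 ≤ pdist B PN PA i x)
    (F : (Fin M → Fin n → X) → ℝ) {δ : ℝ} (hδ : 0 < δ) :
    probB n B PN PA (fun xs => δ ≤ |F xs|)
      ≤ (∑ xs, (∏ i, ∏ k, pdist B PN PA i (xs i k)) * F xs ^ 2) / δ ^ 2 := by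
  rw [probB, Finset.sum_div]
  refine Finset.sum_le_sum fun xs _ => ?_
  have hw := prod_prod_pdist_nonneg h0 xs
  split_ifs with hF
  · rw [le_div_iff₀ (by positivity)]
    exact mul_le_mul_of_nonneg_left ((pow_le_pow_left₀ hδ.le hF 2).trans_eq (sq_abs _)) hw
  · positivity

end Probability

section Concentration

variable {X : Type*} [Fintype X] [DecidableEq X] {M n : ℕ} {B : Finset (Fin M)} {PN : X → ℝ}
  {PA : ℕ → X → ℝ}

theorem emp_eq_zero_of_prod_ne_zero {xs : Fin M → Fin n → X}
    (hw : ∏ i, ∏ k, pdist B PN PA i (xs i k) ≠ 0) {i : Fin M} {x : X}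
    (hx : pdist B PN PA i x = 0) : emp (xs i) x = 0 := by
  simp only [Finset.prod_ne_zero_iff, Finset.mem_univ, true_implies] at hw
  simp only [emp, div_eq_zero_iff, Nat.cast_eq_zero, Finset.card_eq_zero,
    Finset.filter_eq_empty_iff]
  exact Or.inl fun k _ hk => hw i k (hk ▸ hx)

theorem probB_le_abs_emp_sub_le (h0 : ∀ i x, 0 ≤ pdist B PN PA i x)
    (h1 : ∀ i, ∑ x, pdist B PN PA i x = 1) (hn : 0 < n) {δ : ℝ} (hδ : 0 < δ) (i : Fin M) (a : X) :
    probB n B PN PA (fun xs => δ ≤ |emp (xs i) a - pdist B PN PA i a|) ≤ 1 / δ ^ 2 / n := by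
  calc probB n B PN PA (fun xs => δ ≤ |emp (xs i) a - pdist B PN PA i a|)
      ≤ (∑ xs : Fin M → Fin n → X, (∏ i, ∏ k, pdist B PN PA i (xs i k)) *
          (emp (xs i) a - pdist B PN PA i a) ^ 2) / δ ^ 2 :=
        probB_le_sum_mul_sq_div h0 _ hδ
    _ = (∑ y : Fin n → X, (∏ k, pdist B PN PA i (y k)) *
          (emp y a - pdist B PN PA i a) ^ 2) / δ ^ 2 := by
        rw [sum_pi_prod_mul_apply (fun i => sum_pi_prod_eq_one fun _ => h1 i) i
          fun y => (emp y a - pdist B PN PA i a) ^ 2]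
    _ ≤ 1 / n / δ ^ 2 := by
        gcongr
        exact sum_pi_prod_mul_emp_sub_sq_le (h0 i) (h1 i) hn a
    _ = 1 / δ ^ 2 / n := div_right_comm _ _ _

theorem probB_exists_le_abs_emp_sub_le (h0 : ∀ i x, 0 ≤ pdist B PN PA i x)
    (h1 : ∀ i, ∑ x, pdist B PN PA i x = 1) (hn : 0 < n) {δ : ℝ} (hδ : 0 < δ) :
    probB n B PN PA (fun xs => ∃ i a, δ ≤ |emp (xs i) a - pdist B PN PA i a|)
      ≤ M * Fintype.card X / δ ^ 2 / n := by
  calc probB n B PN PA (fun xs => ∃ i a, δ ≤ |emp (xs i) a - pdist B PN PA i a|)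
      ≤ ∑ i, ∑ a, probB n B PN PA (fun xs => δ ≤ |emp (xs i) a - pdist B PN PA i a|) :=
        (probB_exists_le h0 _).trans (Finset.sum_le_sum fun i _ => probB_exists_le h0 _)
    _ ≤ ∑ _i : Fin M, ∑ _a : X, 1 / δ ^ 2 / n := by
        gcongr with i _ a _
        exact probB_le_abs_emp_sub_le h0 h1 hn hδ i a
    _ = M * Fintype.card X / δ ^ 2 / n := by simp; ring

theorem tendsto_probB_of_emp_near (h0 : ∀ i x, 0 ≤ pdist B PN PA i x)
    (h1 : ∀ i, ∑ x, pdist B PN PA i x = 1) {δ : ℝ} (hδ : 0 < δ)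
    {A : ∀ n, (Fin M → Fin n → X) → Prop}
    (hA : ∀ n (xs : Fin M → Fin n → X), (∀ i x, pdist B PN PA i x = 0 → emp (xs i) x = 0) →
      (∀ i x, |emp (xs i) x - pdist B PN PA i x| < δ) → A n xs) :
    Tendsto (fun n => probB n B PN PA (A n)) atTop (nhds 1) := by
  have hbound : ∀ n, 0 < n → 1 - M * Fintype.card X / δ ^ 2 / n ≤ probB n B PN PA (A n) := by
    intro n hn
    have hnear := probB_add_probB_not (n := n) h1
      fun xs => ∀ i x, |emp (xs i) x - pdist B PN PA i x| < δ
    simp only [not_forall, not_lt] at hnear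
    have hbad := probB_exists_le_abs_emp_sub_le h0 h1 hn hδ
    have hmono : probB n B PN PA (fun xs => ∀ i x, |emp (xs i) x - pdist B PN PA i x| < δ)
        ≤ probB n B PN PA (A n) :=
      probB_mono_of_support h0 fun xs hw => hA n xs fun i x => emp_eq_zero_of_prod_ne_zero hw
    linarith
  refine tendsto_of_tendsto_of_tendsto_of_le_of_le' ?_ tendsto_const_nhds
    (eventually_atTop.2 ⟨1, hbound⟩) (Eventually.of_forall fun n => probB_le_one h0 h1 _)
  simpa using (tendsto_const_div_atTop_nhds_zero_nat (M * Fintype.card X / δ ^ 2)).const_sub 1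

end Concentration

section Continuity

variable {X : Type*} [Fintype X] {M : ℕ}

theorem continuousWithinAt_Gfun {C : Finset (Fin M)} (hC : C.card < M) {P : Fin M → X → ℝ}
    (hP : ∀ i x, 0 ≤ P i x) :
    ContinuousWithinAt (Gfun C) {Q | ∀ i x, P i x = 0 → Q i x = 0} P := by
  have hden : (0 : ℝ) < M - C.card := by
    have : (C.card : ℝ) < M := by exact_mod_cast hC
    linarith
  -- on this set the terms off the support of `P t` vanish, and the others are smooth at `P`
  have hsupp : ∀ Q ∈ {Q : Fin M → X → ℝ | ∀ i x, P i x = 0 → Q i x = 0}, Gfun C Q =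
      ∑ t ∈ Cᶜ, ∑ x ∈ Finset.univ.filter (P t · ≠ 0),
        Q t x * Real.log (Q t x / ((∑ l ∈ Cᶜ, Q l x) / (M - C.card))) := fun Q hQ =>
    Finset.sum_congr rfl fun t _ => (Finset.sum_filter_of_ne (p := (P t · ≠ 0))
      fun x _ hx hPx => hx (by rw [hQ t x hPx, zero_mul])).symm
  refine ContinuousWithinAt.congr ?_ hsupp (hsupp P fun _ _ h => h)
  refine ContinuousAt.continuousWithinAt (tendsto_finsetSum _ fun t ht =>
    tendsto_finsetSum _ fun x hx => ?_)
  have hPtx : 0 < P t x := (hP t x).lt_of_ne' (Finset.mem_filter.1 hx).2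
  have hmix : 0 < (∑ l ∈ Cᶜ, P l x) / (M - C.card) :=
    div_pos (hPtx.trans_le (Finset.single_le_sum (fun l _ => hP l x) ht)) hden
  have hcoord : ∀ s b, Continuous fun Q : Fin M → X → ℝ => Q s b := by fun_prop
  have hmixc : Continuous fun Q : Fin M → X → ℝ => (∑ l ∈ Cᶜ, Q l x) / (M - C.card) :=
    (continuous_finsetSum _ fun l _ => hcoord l x).div_const _
  exact (hcoord t x).continuousAt.mul
    (((hcoord t x).continuousAt.div hmixc.continuousAt hmix.ne').log (div_pos hPtx hmix).ne')

theorem exists_forall_abs_Gfun_sub_lt {𝒞 : Finset (Finset (Fin M))} (h𝒞 : ∀ C ∈ 𝒞, C.card < M)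
    {P : Fin M → X → ℝ} (hP : ∀ i x, 0 ≤ P i x) {ε : ℝ} (hε : 0 < ε) :
    ∃ δ > 0, ∀ Q : Fin M → X → ℝ, (∀ i x, P i x = 0 → Q i x = 0) →
      (∀ i x, |Q i x - P i x| < δ) → ∀ C ∈ 𝒞, |Gfun C Q - Gfun C P| < ε := by
  have hev : ∀ᶠ Q in nhdsWithin P {Q | ∀ i x, P i x = 0 → Q i x = 0},
      ∀ C ∈ 𝒞, |Gfun C Q - Gfun C P| < ε :=
    (Finset.eventually_all 𝒞).2 fun C hC =>
      (continuousWithinAt_Gfun (h𝒞 C hC) hP).eventually (Metric.ball_mem_nhds _ hε)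
  obtain ⟨δ, hδ, hδP⟩ := Metric.eventually_nhds_iff.1 (eventually_nhdsWithin_iff.1 hev)
  refine ⟨δ, hδ, fun Q hQ hnear => hδP ?_ hQ⟩
  simpa only [dist_pi_lt_iff hδ, Real.dist_eq] using hnear

end Continuity

section Model

variable {X : Type*} [Fintype X] {M T : ℕ} {B C : Finset (Fin M)} {PN : X → ℝ} {PA : ℕ → X → ℝ}

theorem mem_SS : C ∈ SS M T ↔ C.Nonempty ∧ C.card ≤ T := by
  simp [SS]

theorem exists_mem_SS_ne (hM : 2 ≤ M) (hT : 1 ≤ T) (B : Finset (Fin M)) :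
    ∃ C ∈ SS M T, C ≠ B := by
  have hsingle : ∀ i : Fin M, {i} ∈ SS M T := fun i => mem_SS.2 ⟨by simp, by simpa using hT⟩
  by_cases h : {⟨0, by omega⟩} = B
  · refine ⟨{⟨1, by omega⟩}, hsingle _, ?_⟩
    simp [← h]
  · exact ⟨_, hsingle _, h⟩

theorem finite_setOf_mem_SS_ne (B : Finset (Fin M)) : {C | C ∈ SS M T ∧ C ≠ B}.Finite :=
  (SS M T).finite_toSet.subset fun _ h => h.1

theorem jmap_mem_Icc {i : Fin M} (hi : i ∈ B) (hBT : B.card ≤ T) : jmap B i ∈ Finset.Icc 1 T :=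
  Finset.mem_Icc.2 ⟨Finset.card_pos.2 ⟨i, Finset.mem_filter.2 ⟨hi, le_rfl⟩⟩,
    (Finset.card_filter_le _ _).trans hBT⟩

theorem isProbDist_pdist (hP : ValidTuple T PN PA) (hBT : B.card ≤ T) (i : Fin M) :
    IsProbDist (pdist B PN PA i) := by
  unfold pdist
  split_ifs with hi
  exacts [hP.2.1 _ (jmap_mem_Icc hi hBT), hP.1]

theorem sum_compl_pdist {β : Type*} [AddCommMonoid β] (C : Finset (Fin M))
    (F : Fin M → (X → ℝ) → β) :
    ∑ l ∈ Cᶜ, F l (pdist B PN PA l)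
      = ∑ l ∈ B \ C, F l (PA (jmap B l)) + ∑ l ∈ Bᶜ \ C, F l PN := by
  rw [← Finset.sum_filter_add_sum_filter_not Cᶜ (· ∈ B)]
  congr 1 <;> refine Finset.sum_congr (by ext; simp [and_comm]) fun l hl => ?_ <;>
    simp_all [pdist]

theorem Gfun_pdist (C : Finset (Fin M)) : Gfun C (pdist B PN PA) = GD B C PN PA := by
  have hmix : (fun x => (∑ l ∈ Cᶜ, pdist B PN PA l x) / ((M : ℝ) - C.card)) = Pmix B C PN PA :=
    funext fun x => by rw [Pmix, sum_compl_pdist C fun _ p => p x]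
  rw [Gfun, hmix, GD, sum_compl_pdist C fun _ p => KL p (Pmix B C PN PA)]

theorem KL_self (P : X → ℝ) : KL P P = 0 :=
  Finset.sum_eq_zero fun x _ => by
    rcases eq_or_ne (P x) 0 with h | h <;> simp [h]

theorem GD_self (hBM : B.card < M) : GD B B PN PA = 0 := by
  have hmix : Pmix B B PN PA = PN := funext fun x => by
    have hden : (M : ℝ) - B.card ≠ 0 := sub_ne_zero.2 (by exact_mod_cast hBM.ne')
    rw [Pmix, Finset.sdiff_self, Finset.sdiff_eq_self_of_disjoint disjoint_compl_left,
      Finset.sum_empty, Finset.sum_const, Finset.card_compl, Fintype.card_fin, nsmul_eq_mul,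
      Nat.cast_sub hBM.le, zero_add, mul_div_cancel_left₀ _ hden]
  simp [GD, hmix, KL_self]

theorem GDmin_eq_sInf_image :
    GDmin T B PN PA = sInf ((fun C => GD B C PN PA) '' {C | C ∈ SS M T ∧ C ≠ B}) := by
  rw [GDmin]
  congr 1
  ext r
  simp [eq_comm]

theorem GDmin_le (hC : C ∈ SS M T) (hCB : C ≠ B) : GDmin T B PN PA ≤ GD B C PN PA := by
  rw [GDmin_eq_sInf_image]
  exact csInf_le ((finite_setOf_mem_SS_ne B).image _).bddBelow
    ⟨C, ⟨hC, hCB⟩, rfl⟩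

theorem exists_GD_eq_GDmin (hS : ∃ C ∈ SS M T, C ≠ B) :
    ∃ C ∈ SS M T, C ≠ B ∧ GD B C PN PA = GDmin T B PN PA := by
  obtain ⟨C, hC, hCB⟩ := hS
  have hne : ((fun C => GD B C PN PA) '' {C | C ∈ SS M T ∧ C ≠ B}).Nonempty :=
    ⟨_, C, ⟨hC, hCB⟩, rfl⟩
  obtain ⟨C', ⟨hC', hC'B⟩, hGD⟩ := hne.csInf_mem ((finite_setOf_mem_SS_ne B).image _)
  exact ⟨C', hC', hC'B, by rw [GDmin_eq_sInf_image]; exact hGD⟩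

end Model

section Decision

variable {X : Type*} [Fintype X] [DecidableEq X] {M T n : ℕ} {B C : Finset (Fin M)}
  {PN : X → ℝ} {PA : ℕ → X → ℝ}

theorem tendsto_probB_of_score_near (hP : ValidTuple T PN PA) (hBT : B.card ≤ T) (hTM : T < M)
    {ε : ℝ} (hε : 0 < ε) {A : ∀ n, (Fin M → Fin n → X) → Prop}
    (hA : ∀ n (xs : Fin M → Fin n → X),
      (∀ C ∈ SS M T, |score C xs - GD B C PN PA| < ε) → A n xs) :
    Tendsto (fun n => probB n B PN PA (A n)) atTop (nhds 1) := by
  have h0 i := (isProbDist_pdist hP hBT i).1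
  obtain ⟨δ, hδ, hδQ⟩ := exists_forall_abs_Gfun_sub_lt
    (fun C hC => (mem_SS.1 hC).2.trans_lt hTM) (fun i => h0 i) hε
  exact tendsto_probB_of_emp_near h0 (fun i => (isProbDist_pdist hP hBT i).2) hδ
    fun n xs hsupp hnear => hA n xs fun C hC => Gfun_pdist (PA := PA) C ▸ hδQ _ hsupp hnear C hC

theorem minScore_le {xs : Fin M → Fin n → X} (hC : C ∈ SS M T) (hCB : C ≠ B) :
    minScore T B xs ≤ score C xs :=
  csInf_le ((finite_setOf_mem_SS_ne B).image _).bddBelow ⟨C, ⟨hC, hCB⟩, rfl⟩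

theorem le_minScore {xs : Fin M → Fin n → X} (hS : ∃ C ∈ SS M T, C ≠ B) {c : ℝ}
    (h : ∀ C ∈ SS M T, C ≠ B → c ≤ score C xs) : c ≤ minScore T B xs := by
  obtain ⟨C, hC, hCB⟩ := hS
  exact le_csInf ⟨_, C, ⟨hC, hCB⟩, rfl⟩ fun _ ⟨C', ⟨hC', hC'B⟩, hr⟩ => hr ▸ h C' hC' hC'B

variable {lam ε : ℝ} {xs : Fin M → Fin n → X}

theorem score_self_lt (hB : B ∈ SS M T) (hBM : B.card < M)
    (h : ∀ C ∈ SS M T, |score C xs - GD B C PN PA| < ε) : score B xs < ε := by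
  simpa [GD_self hBM] using (abs_lt.1 (h B hB)).2

theorem Psi_ne_none (hB : B ∈ SS M T) (hS : ∃ C ∈ SS M T, C ≠ B) (hBM : B.card < M)
    (hεlam : ε ≤ lam) (hgap : lam + ε < GDmin T B PN PA)
    (h : ∀ C ∈ SS M T, |score C xs - GD B C PN PA| < ε) : Psi T lam xs ≠ none := by
  have hmin : lam < minScore T B xs := by
    have : GDmin T B PN PA - ε ≤ minScore T B xs := le_minScore hS fun C hC hCB => by
      linarith [(abs_lt.1 (h C hC)).1, GDmin_le (PN := PN) (PA := PA) hC hCB]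
    linarith
  rw [Psi, dif_pos ⟨B, hB, by linarith [score_self_lt hB hBM h], hmin⟩]
  exact Option.some_ne_none _

theorem Psi_eq_none (hB : B ∈ SS M T) (hS : ∃ C ∈ SS M T, C ≠ B) (hBM : B.card < M)
    (hεlam : ε ≤ lam) (hgap : GDmin T B PN PA + ε ≤ lam)
    (h : ∀ C ∈ SS M T, |score C xs - GD B C PN PA| < ε) : Psi T lam xs = none := by
  rw [Psi, dif_neg]
  rintro ⟨B', hB', -, hlam'⟩
  obtain rfl | hB'B := eq_or_ne B' B
  · obtain ⟨C, hC, hCB, hGD⟩ := exists_GD_eq_GDmin (PN := PN) (PA := PA) hS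
    linarith [minScore_le (xs := xs) hC hCB, (abs_lt.1 (h C hC)).2]
  · linarith [minScore_le (xs := xs) hB hB'B.symm, score_self_lt hB hBM h]

end Decision

/-- (Phase transition.) Fix `B ∈ S` and a valid tuple of distributions. If
the threshold satisfies `0 < λ < GD(B, P_N, P_B)` then the false reject probability of `Ψ_n`
vanishes as `n → ∞`; conversely if `λ > GD(B, P_N, P_B)` then it tends to one. -/
theorem false_reject_phase_transition
    {X : Type*} [Fintype X] [DecidableEq X] (M T : ℕ) (hM : 3 ≤ M) (hT : T = (M - 1) / 2)
    (PN : X → ℝ) (PA : ℕ → X → ℝ) (hP : ValidTuple T PN PA)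
    (B : Finset (Fin M)) (hB : B ∈ SS M T) (lam : ℝ) (hlam : 0 < lam) :
    (lam < GDmin T B PN PA →
      Filter.Tendsto
        (fun n : ℕ => zetaT (M := M) (n := n) (fun xs => Psi T lam xs) B PN PA)
        Filter.atTop (nhds 0)) ∧
    (GDmin T B PN PA < lam →
      Filter.Tendsto
        (fun n : ℕ => zetaT (M := M) (n := n) (fun xs => Psi T lam xs) B PN PA)
        Filter.atTop (nhds 1)) := by
  have hTM : T < M := by omega
  have hBT : B.card ≤ T := (mem_SS.1 hB).2
  have hS := exists_mem_SS_ne (T := T) (by omega) (by omega) B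
  have hBM := hBT.trans_lt hTM
  refine ⟨fun hlt => ?_, fun hgt => ?_⟩
  · obtain ⟨ε, hε, hεlt⟩ := exists_between (lt_min hlam (sub_pos.2 hlt))
    have hne := tendsto_probB_of_score_near hP hBT hTM hε (A := fun _ xs => ¬Psi T lam xs = none)
      fun _ _ h => Psi_ne_none hB hS hBM (lt_min_iff.1 hεlt).1.le
        (by linarith [(lt_min_iff.1 hεlt).2]) h
    have hcompl n := probB_add_probB_not (n := n) (fun i => (isProbDist_pdist hP hBT i).2)
      fun xs => Psi T lam xs = none
    simpa [zetaT, ← eq_sub_iff_add_eq.2 (hcompl _)] using hne.const_sub 1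
  · obtain ⟨ε, hε, hεlt⟩ := exists_between (lt_min hlam (sub_pos.2 hgt))
    exact tendsto_probB_of_score_near hP hBT hTM hε fun _ _ h =>
      Psi_eq_none hB hS hBM (lt_min_iff.1 hεlt).1.le (by linarith [(lt_min_iff.1 hεlt).2]) h
end
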